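/- Consider the system ṙ = Ar with A = [[a,b,0],[−b,a,0],[0,0,λ₃]], b > 0, and initial value with x₀² + y₀² > 0 and z₀ ≠ 0. Then the torsion of the trajectory equals τ(t) = −bλ₃((a−λ₃)² + b²) z₀ / [ λ₃²((a−λ₃)² + b²) z₀² e^{λ₃t} + b²(a² + b²)(x₀² + y₀²) e^{(2a−λ₃)t} ]. -/

import Mathlib

open Matrix Real

noncomputable def e3norm (a : Fin 3 → ℝ) : ℝ := Real.sqrt (∑ i, (a i) ^ 2)

/-- Torsion of a space curve `r`. -/
noncomputable def tors (r : ℝ → Fin 3 → ℝ) (t : ℝ) : ℝ :=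
  (crossProduct (deriv r t) (deriv (deriv r) t) ⬝ᵥ deriv (deriv (deriv r)) t) /
    (e3norm (crossProduct (deriv r t) (deriv (deriv r) t))) ^ 2

private lemma comb (a b p q t : ℝ) :
    HasDerivAt (fun s => Real.exp (a*s) * (p * Real.cos (b*s) + q * Real.sin (b*s)))
      (Real.exp (a*t) * ((a*p+b*q) * Real.cos (b*t) + (a*q-b*p) * Real.sin (b*t))) t := by
  have hid : HasDerivAt (fun s : ℝ => a*s) a t := by
    simpa using (hasDerivAt_id t).const_mul a
  have hidb : HasDerivAt (fun s : ℝ => b*s) b t := by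
    simpa using (hasDerivAt_id t).const_mul b
  have he : HasDerivAt (fun s => Real.exp (a*s)) (Real.exp (a*t) * a) t :=
    (Real.hasDerivAt_exp (a*t)).comp t hid
  have hc : HasDerivAt (fun s => Real.cos (b*s)) (-Real.sin (b*t) * b) t :=
    (Real.hasDerivAt_cos (b*t)).comp t hidb
  have hs : HasDerivAt (fun s => Real.sin (b*s)) (Real.cos (b*t) * b) t :=
    (Real.hasDerivAt_sin (b*t)).comp t hidb
  have := he.mul ((hc.const_mul p).add (hs.const_mul q))
  exact this.congr_deriv (by simp only [Pi.add_apply]; ring)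

private lemma combz (l3 w t : ℝ) :
    HasDerivAt (fun s => w * Real.exp (l3*s)) (l3*w * Real.exp (l3*t)) t := by
  have hid : HasDerivAt (fun s : ℝ => l3*s) l3 t := by
    simpa using (hasDerivAt_id t).const_mul l3
  have := ((Real.hasDerivAt_exp (l3*t)).comp t hid).const_mul w
  exact this.congr_deriv (by ring)

noncomputable def gAux (a b l3 p q w : ℝ) : ℝ → Fin 3 → ℝ :=
  fun s => ![Real.exp (a*s) * (p * Real.cos (b*s) + q * Real.sin (b*s)),
             Real.exp (a*s) * (q * Real.cos (b*s) + (-p) * Real.sin (b*s)),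
             w * Real.exp (l3*s)]

private lemma gAux_hasDerivAt (a b l3 p q w t : ℝ) :
    HasDerivAt (gAux a b l3 p q w) (gAux a b l3 (a*p+b*q) (a*q-b*p) (l3*w) t) t := by
  rw [hasDerivAt_pi]
  intro i
  fin_cases i
  · simpa [gAux] using comb a b p q t
  · have h := comb a b q (-p) t
    simp [gAux]
    simp only [neg_mul] at h
    exact h.congr_deriv (by ring)
  · simpa [gAux] using combz l3 w t

private lemma gAux_deriv (a b l3 p q w : ℝ) :
    deriv (gAux a b l3 p q w) = gAux a b l3 (a*p+b*q) (a*q-b*p) (l3*w) :=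
  funext fun t => (gAux_hasDerivAt a b l3 p q w t).deriv

private lemma auxdiv (a b l3 x0 y0 z0 t X Y Z NUM DEN : ℝ) (hb : 0 < b)
    (hxy : 0 < x0 ^ 2 + y0 ^ 2)
    (hR : X ^ 2 + Y ^ 2 = (x0 ^ 2 + y0 ^ 2) * Real.exp (a * t) ^ 2)
    (hZ : Z = z0 * Real.exp (l3 * t))
    (hN : NUM = -(b * l3) * ((a - l3) ^ 2 + b ^ 2) * (a ^ 2 + b ^ 2) * (X ^ 2 + Y ^ 2) * Z)
    (hD : DEN = l3 ^ 2 * (a ^ 2 + b ^ 2) * ((a - l3) ^ 2 + b ^ 2) * (X ^ 2 + Y ^ 2) * Z ^ 2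
        + b ^ 2 * (a ^ 2 + b ^ 2) ^ 2 * (X ^ 2 + Y ^ 2) ^ 2) :
    NUM / DEN =
      -b * l3 * ((a - l3) ^ 2 + b ^ 2) * z0 /
        (l3 ^ 2 * ((a - l3) ^ 2 + b ^ 2) * z0 ^ 2 * Real.exp (l3 * t) +
          b ^ 2 * (a ^ 2 + b ^ 2) * (x0 ^ 2 + y0 ^ 2) *
            Real.exp ((2 * a - l3) * t)) := by
  subst hN hD hZ
  rw [hR]
  have hb2 : (0:ℝ) < b ^ 2 := by positivity
  have hab : (0:ℝ) < a ^ 2 + b ^ 2 := by positivity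
  have hE : (0:ℝ) < Real.exp (a * t) := Real.exp_pos _
  have hF : (0:ℝ) < Real.exp (l3 * t) := Real.exp_pos _
  have hG : (0:ℝ) < Real.exp ((2 * a - l3) * t) := Real.exp_pos _
  have hEF : Real.exp ((2 * a - l3) * t) * Real.exp (l3 * t) = Real.exp (a * t) ^ 2 := by
    rw [← Real.exp_add, sq, ← Real.exp_add]; ring_nf
  have hDenL : (0:ℝ) < l3 ^ 2 * (a ^ 2 + b ^ 2) * ((a - l3) ^ 2 + b ^ 2) * ((x0 ^ 2 + y0 ^ 2) * Real.exp (a * t) ^ 2) * (z0 * Real.exp (l3 * t)) ^ 2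
        + b ^ 2 * (a ^ 2 + b ^ 2) ^ 2 * ((x0 ^ 2 + y0 ^ 2) * Real.exp (a * t) ^ 2) ^ 2 := by
    have h1 : (0:ℝ) ≤ l3 ^ 2 * (a ^ 2 + b ^ 2) * ((a - l3) ^ 2 + b ^ 2) * ((x0 ^ 2 + y0 ^ 2) * Real.exp (a * t) ^ 2) * (z0 * Real.exp (l3 * t)) ^ 2 := by positivity
    have h2 : (0:ℝ) < b ^ 2 * (a ^ 2 + b ^ 2) ^ 2 * ((x0 ^ 2 + y0 ^ 2) * Real.exp (a * t) ^ 2) ^ 2 := by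
      apply mul_pos (mul_pos hb2 (by positivity))
      exact pow_pos (mul_pos hxy (by positivity)) 2
    linarith
  have hDenR : (0:ℝ) < l3 ^ 2 * ((a - l3) ^ 2 + b ^ 2) * z0 ^ 2 * Real.exp (l3 * t) +
          b ^ 2 * (a ^ 2 + b ^ 2) * (x0 ^ 2 + y0 ^ 2) * Real.exp ((2 * a - l3) * t) := by
    have h1 : (0:ℝ) ≤ l3 ^ 2 * ((a - l3) ^ 2 + b ^ 2) * z0 ^ 2 * Real.exp (l3 * t) := by positivity
    have h2 : (0:ℝ) < b ^ 2 * (a ^ 2 + b ^ 2) * (x0 ^ 2 + y0 ^ 2) * Real.exp ((2 * a - l3) * t) :=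
      mul_pos (mul_pos (mul_pos hb2 hab) hxy) hG
    linarith
  rw [div_eq_div_iff hDenL.ne' hDenR.ne']
  linear_combination (-b * l3 * ((a - l3) ^ 2 + b ^ 2) * z0 * b ^ 2 * (a ^ 2 + b ^ 2) ^ 2 *
    (x0 ^ 2 + y0 ^ 2) ^ 2 * Real.exp (a * t) ^ 2) * hEF

private lemma e3norm_sq (v : Fin 3 → ℝ) :
    e3norm v ^ 2 = v 0 ^ 2 + v 1 ^ 2 + v 2 ^ 2 := by
  rw [e3norm, Real.sq_sqrt (by positivity), Fin.sum_univ_three]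

theorem torsion_formula_rotation_block
    (a b l3 x0 y0 z0 : ℝ) (hb : 0 < b)
    (hxy : 0 < x0 ^ 2 + y0 ^ 2) (hz : z0 ≠ 0)
    (r : ℝ → Fin 3 → ℝ)
    (hr : r = fun t =>
      ![Real.exp (a * t) * (x0 * Real.cos (b * t) + y0 * Real.sin (b * t)),
        Real.exp (a * t) * (-x0 * Real.sin (b * t) + y0 * Real.cos (b * t)),
        z0 * Real.exp (l3 * t)]) :
    ∀ t : ℝ,
      tors r t =
        -b * l3 * ((a - l3) ^ 2 + b ^ 2) * z0 /
          (l3 ^ 2 * ((a - l3) ^ 2 + b ^ 2) * z0 ^ 2 * Real.exp (l3 * t) +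
            b ^ 2 * (a ^ 2 + b ^ 2) * (x0 ^ 2 + y0 ^ 2) *
              Real.exp ((2 * a - l3) * t)) := by
  have hrg : r = gAux a b l3 x0 y0 z0 := by
    rw [hr]; funext s i
    fin_cases i <;> simp [gAux] <;> ring
  intro t
  rw [tors, hrg]
  simp only [gAux_deriv]
  rw [e3norm_sq]
  have hR : (Real.exp (a*t) * (x0 * Real.cos (b*t) + y0 * Real.sin (b*t))) ^ 2 +
      (Real.exp (a*t) * (y0 * Real.cos (b*t) + (-x0) * Real.sin (b*t))) ^ 2 =
      (x0 ^ 2 + y0 ^ 2) * Real.exp (a * t) ^ 2 := by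
    linear_combination (Real.exp (a*t) ^ 2 * (x0 ^ 2 + y0 ^ 2)) * Real.sin_sq_add_cos_sq (b*t)
  simp only [gAux, cross_apply, dotProduct, Fin.sum_univ_three, Matrix.cons_val_zero,
    Matrix.cons_val_one, Matrix.head_cons, Matrix.cons_val_two, Matrix.tail_cons]
  exact auxdiv a b l3 x0 y0 z0 t _ _ _ _ _ hb hxy hR rfl (by ring) (by ring)
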